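/- Let β ∈ ℝ and z ∈ ℝ with z ≠ −1. Define b_k = (β−1)_k/k!, the Jacobi polynomial P_n^{(a,b)}(x) = Σ_{s=0}^{n} ((a+s+1)_{n−s}/(n−s)!) · ((b+n−s+1)_s/s!) · ((x−1)/2)^s ((x+1)/2)^{n−s}, the closed-form coefficients c_k = (−1)^k (1+z)^{−2} P_k^{(2−β−k, β−1)}((z−1)/(z+1)), and d_k = (1/k!) Σ_{ν=0}^{k−1} Σ_{λ=0}^{ν} ν! (ν−λ+1)_{k−1−ν} b_{k−1−ν} c_λ for k ≥ 1. Then c satisfies the ρ₀ = 1 converging-factor recursion of the logarithm series: c_0 = b_0/(1+z)² and c_k = c_{k−1}/(1+z) + b_k/(1+z)² − z d_k/(1+z) for every k ≥ 1. -/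

import Mathlib

/-- The Pochhammer symbol `(x)_j = x(x+1)⋯(x+j−1)`, with `(x)_0 = 1`. -/
noncomputable def poch (x : ℝ) (j : ℕ) : ℝ := ∏ i ∈ Finset.range j, (x + i)

/-- The Jacobi polynomial
`P_n^{(a,b)}(x) = Σ_{s=0}^{n} ((a+s+1)_{n−s}/(n−s)!) ((b+n−s+1)_s/s!) ((x−1)/2)^s ((x+1)/2)^{n−s}`. -/
noncomputable def jacobi (a b : ℝ) (n : ℕ) (x : ℝ) : ℝ :=
  ∑ s ∈ Finset.range (n + 1),
    (poch (a + s + 1) (n - s) / (Nat.factorial (n - s) : ℝ)) *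
      (poch (b + (n : ℝ) - s + 1) s / (Nat.factorial s : ℝ)) *
        ((x - 1) / 2) ^ s * ((x + 1) / 2) ^ (n - s)

/-- The coefficients `d_k` of the product of two inverse factorial series with
coefficient sequences `b` and `c`:
`d_k = (1/k!) Σ_{ν=0}^{k−1} Σ_{λ=0}^{ν} ν! (ν−λ+1)_{k−1−ν} b_{k−1−ν} c_λ`. -/
noncomputable def prodCoeff (b c : ℕ → ℝ) (k : ℕ) : ℝ :=
  (1 / (Nat.factorial k : ℝ)) *
    ∑ ν ∈ Finset.range k, ∑ l ∈ Finset.range (ν + 1),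
      (Nat.factorial ν : ℝ) * poch ((ν : ℝ) - l + 1) (k - 1 - ν) * b (k - 1 - ν) * c l

open Finset
lemma poch_zero (x : ℝ) : poch x 0 = 1 := by simp [poch]

lemma poch_succ (x : ℝ) (j : ℕ) : poch x (j+1) = poch x j * (x + j) := by
  simp [poch, prod_range_succ]

lemma poch_succ' (x : ℝ) (j : ℕ) : poch x (j+1) = x * poch (x+1) j := by
  simp only [poch, prod_range_succ']
  rw [mul_comm]
  congr 1
  · simp
  · apply prod_congr rfl; intro i _; push_cast; ring

lemma poch_add (x : ℝ) (a b : ℕ) : poch x (a+b) = poch x a * poch (x+a) b := by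
  simp only [poch, prod_range_add]
  congr 1
  apply prod_congr rfl; intro i _; push_cast; ring

lemma poch_one (n : ℕ) : poch 1 n = n.factorial := by
  induction n with
  | zero => simp [poch]
  | succ n ih => rw [poch_succ, ih]; push_cast [Nat.factorial_succ]; ring

lemma poch_nat (p q : ℕ) : poch ((p:ℝ)+1) q * p.factorial = ((p+q).factorial : ℝ) := by
  induction q with
  | zero => simp [poch]
  | succ q ih =>
      rw [poch_succ, show p + (q+1) = (p+q)+1 by ring, Nat.factorial_succ]
      push_cast
      nlinarith [ih]

lemma poch_neg (x : ℝ) (j : ℕ) : poch (1 - x - j) j = (-1)^j * poch x j := by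
  induction j with
  | zero => simp [poch]
  | succ j ih =>
      rw [poch_succ', poch_succ]
      push_cast
      rw [show 1 - x - ((j:ℝ)+1) + 1 = 1 - x - j by ring] at *
      rw [ih]
      ring

lemma poch_pascal (a : ℝ) (m : ℕ) :
    poch a (m+1) = (m+1) * poch a m + poch (a-1) (m+1) := by
  rw [poch_succ, poch_succ']
  have : a - 1 + 1 = a := by ring
  rw [this]
  ring

lemma poch_eq_zero (x : ℝ) (p j : ℕ) (hx : x + p = 0) (hp : p < j) : poch x j = 0 := by
  apply Finset.prod_eq_zero (Finset.mem_range.2 hp)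
  exact hx

lemma fact_succ_cast (m : ℕ) : (((m+1).factorial : ℝ)) = ((m:ℝ)+1) * m.factorial := by
  push_cast [Nat.factorial_succ]; ring

lemma keyF0 (x : ℝ) (m : ℕ) :
    (∑ μ ∈ range (m+1), poch x μ / μ.factorial) * m.factorial = poch (x+1) m := by
  induction m with
  | zero => simp [poch]
  | succ m ih =>
      rw [sum_range_succ, fact_succ_cast, add_mul]
      have hfz : ((m+1).factorial : ℝ) ≠ 0 := Nat.cast_ne_zero.2 (m+1).factorial_ne_zero
      rw [fact_succ_cast] at hfz
      rw [div_mul_cancel₀ _ hfz]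
      have hp := poch_pascal (x+1) m
      have e : x + 1 - 1 = x := by ring
      rw [e] at hp
      linear_combination ((m:ℝ)+1) * ih - hp

lemma keyF (x : ℝ) (lam : ℕ) : ∀ m : ℕ,
    (∑ μ ∈ range (m+1), poch x μ / μ.factorial * poch ((m:ℝ) - μ + 1) lam) * m.factorial
      = lam.factorial * poch (x+1+lam) m := by
  induction lam with
  | zero =>
      intro m
      simp only [poch_zero, mul_one, Nat.factorial_zero, Nat.cast_one, one_mul]
      rw [keyF0]
      norm_num
  | succ lam ih =>
      intro m
      induction m with
      | zero =>
          rw [sum_range_one]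
          norm_num [poch_zero, show (0:ℝ) - 0 + 1 = (1:ℝ) by ring, poch_one]
      | succ m ihm =>
          have step : ∀ μ ∈ range (m+2), poch x μ / μ.factorial * poch (((m+1:ℕ):ℝ) - μ + 1) (lam+1)
              = poch x μ / μ.factorial * poch ((m:ℝ) - μ + 1) (lam+1)
                + ((lam:ℝ)+1) * (poch x μ / μ.factorial * poch (((m+1:ℕ):ℝ) - μ + 1) lam) := by
            intro μ _
            have hp := poch_pascal ((m:ℝ) - μ + 1 + 1) lam
            have e1 : (m:ℝ) - μ + 1 + 1 - 1 = (m:ℝ) - μ + 1 := by ring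
            have e3 : (((m+1:ℕ)):ℝ) - μ + 1 = (m:ℝ) - μ + 1 + 1 := by push_cast; ring
            rw [e3, e1] at *
            rw [hp]
            push_cast
            ring
          have hz : poch ((m:ℝ) - ((m+1:ℕ):ℝ) + 1) (lam+1) = 0 := by
            apply poch_eq_zero _ 0 _ (by push_cast; ring) (Nat.succ_pos _)
          rw [sum_congr rfl step, sum_add_distrib, ← mul_sum,
            sum_range_succ (fun μ => poch x μ / μ.factorial * poch ((m:ℝ) - μ + 1) (lam+1)),
            hz, mul_zero, add_zero]
          have hp := poch_pascal (x+1+((lam:ℝ)+1)) m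
          have e1 : x+1+((lam:ℝ)+1) - 1 = x+1+lam := by ring
          rw [e1] at hp
          have ih2 := ih (m+1)
          push_cast [Nat.factorial_succ] at ihm ih2 ⊢
          linear_combination ((m:ℝ)+1)*ihm + ((lam:ℝ)+1)*ih2 - ((lam:ℝ)+1)*(lam.factorial:ℝ)*hp

lemma vand : ∀ k i t : ℕ, (∑ l ∈ range (k+1), (l.choose i) * ((k-l).choose t)) = (k+1).choose (i+t+1) := by
  intro k
  induction k with
  | zero =>
      intro i t
      rw [sum_range_one]
      match i, t with
      | 0, 0 => rfl
      | 0, t+1 => simp [Nat.choose_eq_zero_of_lt]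
      | i+1, t =>
          rw [Nat.choose_eq_zero_of_lt (show 0 < i+1 by omega),
            Nat.choose_eq_zero_of_lt (show 1 < i+1+t+1 by omega)]
          ring
  | succ k ih =>
      intro i t
      match t with
      | 0 =>
          simp only [Nat.choose_zero_right, mul_one]
          by_cases hi : i ≤ k+1
          · rw [← Nat.sum_Icc_choose (k+1) i]
            refine (Finset.sum_subset ?_ ?_).symm
            · intro x hx
              rw [mem_Icc] at hx; rw [mem_range]; omega
            · intro x hx1 hx2
              rw [mem_range] at hx1
              rw [mem_Icc] at hx2
              exact Nat.choose_eq_zero_of_lt (by omega)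
          · rw [Nat.choose_eq_zero_of_lt (by omega)]
            apply Finset.sum_eq_zero
            intro x hx
            rw [mem_range] at hx
            exact Nat.choose_eq_zero_of_lt (by omega)
      | t+1 =>
          rw [sum_range_succ, Nat.sub_self, Nat.choose_eq_zero_of_lt (Nat.succ_pos t), mul_zero, add_zero]
          have hs : ∀ l ∈ range (k+1), l.choose i * ((k+1-l).choose (t+1))
              = l.choose i * ((k-l).choose (t+1)) + l.choose i * ((k-l).choose t) := by
            intro l hl
            rw [mem_range] at hl
            rw [show k+1-l = (k-l)+1 by omega, Nat.choose_succ_succ, Nat.mul_add, Nat.add_comm (l.choose i * _)]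
          rw [sum_congr rfl hs, sum_add_distrib, ih i (t+1), ih i t,
            show i+(t+1)+1 = (i+t+1)+1 by ring, Nat.choose_succ_succ (k+1) (i+t+1)]
          simp only [Nat.succ_eq_add_one]
          omega

lemma tel (β : ℝ) (k : ℕ) : ∀ j, j ≤ k+1 →
    ∑ i ∈ range j, poch (β-2) i * poch (β+i) (k-i)
      = poch (β-1) (k+1) - poch (β-2) j * poch (β+(j:ℝ)-1) (k+1-j) := by
  intro j
  induction j with
  | zero => simp [poch_zero, show β+(0:ℝ)-1 = β-1 by ring]
  | succ j ih =>
      intro hj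
      rw [sum_range_succ, ih (by omega)]
      have h1 : poch (β+(j:ℝ)-1) (k+1-j) = (β+(j:ℝ)-1) * poch (β+(j:ℝ)) (k-j) := by
        rw [show k+1-j = (k-j)+1 by omega, poch_succ', show β+(j:ℝ)-1+1 = β+(j:ℝ) by ring]
      have h2 : poch (β-2) (j+1) = poch (β-2) j * (β-2+j) := poch_succ _ _
      have e1 : β+((j+1:ℕ):ℝ)-1 = β+(j:ℝ) := by push_cast; ring
      have e2 : k+1-(j+1) = k-j := by omega
      rw [h1, h2, e1, e2]
      ring

lemma tri (n : ℕ) (f : ℕ → ℕ → ℝ) :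
    ∑ j ∈ range n, ∑ i ∈ range j, f j i = ∑ i ∈ range n, ∑ j ∈ Ico (i+1) n, f j i := by
  induction n with
  | zero => simp
  | succ n ih =>
      rw [sum_range_succ, ih, sum_range_succ, Finset.Ico_self, sum_empty, add_zero,
        ← sum_add_distrib]
      apply sum_congr rfl
      intro i hi
      rw [mem_range] at hi
      rw [Finset.sum_Ico_succ_top (by omega)]

lemma cform (β z : ℝ) (hz : z + 1 ≠ 0) (k : ℕ) :
    (-1:ℝ)^k / (1+z)^2 * jacobi (2-β-k) (β-1) k ((z-1)/(z+1))
      = (∑ j ∈ range (k+1),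
          poch (β-2) j * poch (β+(j:ℝ)) (k-j) / ((j.factorial : ℝ) * ((k-j).factorial : ℝ)) * z^j)
        / (1+z)^(k+2) := by
  have hz1 : (1:ℝ)+z ≠ 0 := by rwa [add_comm] at hz
  rw [jacobi, mul_sum, sum_div,
    ← sum_range_reflect (fun j =>
      poch (β-2) j * poch (β+(j:ℝ)) (k-j) / ((j.factorial : ℝ) * ((k-j).factorial : ℝ)) * z^j
        / (1+z)^(k+2)) (k+1)]
  apply sum_congr rfl
  intro s hs
  rw [mem_range] at hs
  have hs' : s ≤ k := by omega
  obtain ⟨m, rfl⟩ : ∃ m, k = m + s := ⟨k-s, (Nat.sub_add_cancel hs').symm⟩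
  simp only [Nat.add_sub_cancel, show m+s+1-1-s = m by omega]
  have hx1 : ((z-1)/(z+1) - 1)/2 = -(1/(z+1)) := by field_simp; ring
  have hx2 : ((z-1)/(z+1) + 1)/2 = z/(z+1) := by field_simp; ring
  rw [hx1, hx2]
  have hp1 : poch (2-β-((m+s:ℕ):ℝ) + s + 1) m = (-1)^m * poch (β-2) m := by
    rw [← poch_neg (β-2) m]
    congr 1
    push_cast; ring
  have hp2 : poch (β-1+((m+s:ℕ):ℝ)-s+1) s = poch (β+(m:ℝ)) s := by
    congr 1
    push_cast; ring
  rw [hp1, hp2]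
  rw [show (-(1/(z+1)))^s = (-1)^s * (1/(z+1))^s from neg_pow _ _,
    div_pow, show (-1:ℝ)^(m+s) = (-1)^m * (-1)^s by rw [pow_add],
    show (1+z)^(m+s+2) = (1+z)^m * (1+z)^s * (1+z)^2 by rw [pow_add, pow_add]]
  have hne : ((m.factorial : ℝ)) ≠ 0 := Nat.cast_ne_zero.2 m.factorial_ne_zero
  have hne2 : ((s.factorial : ℝ)) ≠ 0 := Nat.cast_ne_zero.2 s.factorial_ne_zero
  have h1 : ∀ n:ℕ, (-1:ℝ)^(n*2) = 1 := fun n => Even.neg_one_pow ⟨n, by ring⟩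
  field_simp
  ring_nf
  simp only [h1]
  rw [Nat.add_sub_cancel_left]
  have hzm : ((1:ℝ)+z)^m ≠ 0 := pow_ne_zero _ hz1
  linear_combination (poch (-2+β) m * poch (β+(m:ℝ)) s * z^m * (s.factorial:ℝ) * (1+z)^s) * (inv_mul_cancel₀ hzm)

lemma dsum (β : ℝ) (c : ℕ → ℝ) (k : ℕ) :
    ∑ ν ∈ range (k+1), ∑ l ∈ range (ν+1),
      (ν.factorial:ℝ) * poch ((ν:ℝ) - l + 1) (k-ν) * (poch (β-1) (k-ν) / ((k-ν).factorial:ℝ)) * c l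
    = ∑ l ∈ range (k+1), (l.factorial:ℝ) * poch (β+(l:ℝ)) (k-l) * c l := by
  have step1 : ∀ ν ∈ range (k+1),
      (∑ l ∈ range (ν+1),
        (ν.factorial:ℝ) * poch ((ν:ℝ) - l + 1) (k-ν) * (poch (β-1) (k-ν) / ((k-ν).factorial:ℝ)) * c l)
      = ∑ l ∈ range (k+1),
        (ν.factorial:ℝ) * poch ((ν:ℝ) - l + 1) (k-ν) * (poch (β-1) (k-ν) / ((k-ν).factorial:ℝ)) * c l := by
    intro ν hν
    rw [mem_range] at hν
    apply Finset.sum_subset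
    · intro x hx; rw [mem_range] at *; omega
    · intro l hl1 hl2
      rw [mem_range] at hl1 hl2
      push_neg at hl2
      obtain ⟨q, rfl⟩ : ∃ q, l = ν+1+q := ⟨l-ν-1, by omega⟩
      have : poch ((ν:ℝ) - ((ν+1+q:ℕ):ℝ) + 1) (k-ν) = 0 := by
        apply poch_eq_zero _ q _ (by push_cast; ring) (by omega)
      rw [this]; ring
  rw [sum_congr rfl step1, sum_comm]
  apply sum_congr rfl
  intro l hl
  rw [mem_range] at hl
  have hlk : l ≤ k := by omega
  rw [← sum_mul]
  have hS : (∑ ν ∈ range (k+1),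
      (ν.factorial:ℝ) * poch ((ν:ℝ) - l + 1) (k-ν) * (poch (β-1) (k-ν) / ((k-ν).factorial:ℝ)))
      = (l.factorial:ℝ) * poch (β+(l:ℝ)) (k-l) := by
    rw [← sum_range_reflect]
    simp only [Nat.add_sub_cancel]
    have shrink : ∑ μ ∈ range (k-l+1),
          ((k-μ).factorial:ℝ) * poch ((((k-μ):ℕ):ℝ) - (l:ℝ) + 1) (k-(k-μ))
            * (poch (β-1) (k-(k-μ)) / ((k-(k-μ)).factorial:ℝ))
        = ∑ μ ∈ range (k+1),
          ((k-μ).factorial:ℝ) * poch ((((k-μ):ℕ):ℝ) - (l:ℝ) + 1) (k-(k-μ))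
            * (poch (β-1) (k-(k-μ)) / ((k-(k-μ)).factorial:ℝ)) := by
      apply Finset.sum_subset
      · intro x hx; rw [mem_range] at *; omega
      · intro μ hμ1 hμ2
        rw [mem_range] at hμ1 hμ2
        push_neg at hμ2
        have h1 : k - μ < l := by omega
        have h2 : μ ≤ k := by omega
        obtain ⟨q, hq⟩ : ∃ q, l = (k-μ)+1+q := ⟨l-(k-μ)-1, by omega⟩
        have : poch ((((k-μ):ℕ):ℝ) - (l:ℝ) + 1) (k-(k-μ)) = 0 := by
          apply poch_eq_zero _ q _ ?_ (by omega)
          rw [hq]; push_cast; ring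
        rw [this]; ring
    rw [← shrink]
    have per : ∀ μ ∈ range (k-l+1),
        ((k-μ).factorial:ℝ) * poch ((((k-μ):ℕ):ℝ) - (l:ℝ) + 1) (k-(k-μ))
          * (poch (β-1) (k-(k-μ)) / ((k-(k-μ)).factorial:ℝ))
        = ((k-l).factorial:ℝ) * (poch (β-1) μ / (μ.factorial:ℝ) * poch ((((k-l):ℕ):ℝ) - (μ:ℝ) + 1) l) := by
      intro μ hμ
      rw [mem_range] at hμ
      have hμ' : μ ≤ k - l := by omega
      have hμk : μ ≤ k := by omega
      have ekk : k-(k-μ) = μ := by omega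
      rw [ekk]
      set p := k - l - μ with hp
      have e1 : (((k-μ):ℕ):ℝ) - l + 1 = ((p:ℕ):ℝ) + 1 := by
        rw [hp]; push_cast [Nat.cast_sub hμk, Nat.cast_sub hlk, Nat.cast_sub hμ']; ring
      have e2 : (((k-l):ℕ):ℝ) - μ + 1 = ((p:ℕ):ℝ) + 1 := by
        rw [hp]; push_cast [Nat.cast_sub hlk, Nat.cast_sub hμ']; ring
      rw [e1, e2]
      have h1 := poch_nat p μ
      have h2 := poch_nat p l
      rw [show p + μ = k - l by omega] at h1
      rw [show p + l = k - μ by omega] at h2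
      have hpf : ((p.factorial:ℝ)) ≠ 0 := Nat.cast_ne_zero.2 p.factorial_ne_zero
      have hkey : ((k-μ).factorial:ℝ) * poch ((p:ℝ)+1) μ
          = ((k-l).factorial:ℝ) * poch ((p:ℝ)+1) l := by
        apply mul_right_cancel₀ hpf
        linear_combination (((k-μ).factorial:ℝ)) * h1 - (((k-l).factorial:ℝ)) * h2
      linear_combination (poch (β-1) μ / (μ.factorial:ℝ)) * hkey
    rw [sum_congr rfl per, ← mul_sum]
    have hk := keyF (β-1) l (k-l)
    have hfne : (((k-l).factorial:ℝ)) ≠ 0 := Nat.cast_ne_zero.2 (k-l).factorial_ne_zero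
    have : (∑ μ ∈ range (k-l+1), poch (β-1) μ / (μ.factorial:ℝ) * poch ((((k-l):ℕ):ℝ) - (μ:ℝ) + 1) l)
        = (l.factorial:ℝ) * poch (β-1+1+(l:ℝ)) (k-l) / ((k-l).factorial:ℝ) := by
      rw [eq_div_iff hfne, hk]
    rw [this, show β-1+1+(l:ℝ) = β+(l:ℝ) by ring]
    field_simp
  rw [hS]

lemma binexp (z : ℝ) (n N : ℕ) (h : n ≤ N) :
    (1+z)^n = ∑ t ∈ range (N+1), ((n.choose t : ℕ):ℝ) * z^t := by
  rw [show (1:ℝ)+z = z+1 by ring, add_pow]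
  simp only [one_pow, mul_one]
  rw [Finset.sum_congr rfl (fun t _ => mul_comm (z^t) ((n.choose t : ℕ):ℝ))]
  apply Finset.sum_subset (by intro x hx; rw [mem_range] at *; omega)
  intro t ht1 ht2
  rw [mem_range] at ht1 ht2
  push_neg at ht2
  rw [Nat.choose_eq_zero_of_lt (by omega)]
  simp

lemma hSlem (β z : ℝ) (k : ℕ) :
    z * ∑ l ∈ range (k+1), (l.factorial:ℝ) * poch (β+(l:ℝ)) (k-l)
        * ((∑ i ∈ range (l+1),
              poch (β-2) i * poch (β+(i:ℝ)) (l-i) / ((i.factorial:ℝ) * ((l-i).factorial:ℝ)) * z^i)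
            * (1+z)^(k-l))
    = ∑ j ∈ range (k+2), (∑ i ∈ range j, poch (β-2) i * poch (β+(i:ℝ)) (k-i))
        * (((k+1).choose j : ℕ):ℝ) * z^j := by
  -- Step 1: rewrite each (l,i) term using poch_add and choose identity
  have step1 : ∀ l ∈ range (k+1), (l.factorial:ℝ) * poch (β+(l:ℝ)) (k-l)
        * ((∑ i ∈ range (l+1),
              poch (β-2) i * poch (β+(i:ℝ)) (l-i) / ((i.factorial:ℝ) * ((l-i).factorial:ℝ)) * z^i)
            * (1+z)^(k-l))
      = ∑ i ∈ range (k+1), ((l.choose i : ℕ):ℝ)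
          * (poch (β-2) i * poch (β+(i:ℝ)) (k-i)) * z^i * (1+z)^(k-l) := by
    intro l hl
    rw [mem_range] at hl
    have hlk : l ≤ k := by omega
    rw [sum_mul, mul_sum]
    conv_rhs => rw [show k+1 = (l+1) + (k-l) by omega, Finset.sum_range_add]
    have hzero : ∑ i ∈ range (k-l), ((l.choose (l+1+i) : ℕ):ℝ)
        * (poch (β-2) (l+1+i) * poch (β+((l+1+i:ℕ):ℝ)) (k-(l+1+i))) * z^(l+1+i) * (1+z)^(k-l) = 0 := by
      apply Finset.sum_eq_zero
      intro i _
      rw [Nat.choose_eq_zero_of_lt (by omega)]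
      simp
    rw [hzero, add_zero]
    apply sum_congr rfl
    intro i hi
    rw [mem_range] at hi
    have hil : i ≤ l := by omega
    have hadd : poch (β+(i:ℝ)) (k-i) = poch (β+(i:ℝ)) (l-i) * poch (β+(l:ℝ)) (k-l) := by
      rw [show k-i = (l-i)+(k-l) by omega, poch_add,
        show β+(i:ℝ)+((l-i:ℕ):ℝ) = β+(l:ℝ) by push_cast [Nat.cast_sub hil]; ring]
    rw [hadd]
    have hch : ((l.choose i : ℕ):ℝ) * (i.factorial:ℝ) * ((l-i).factorial:ℝ) = (l.factorial:ℝ) := by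
      exact_mod_cast congrArg (Nat.cast : ℕ → ℝ) (Nat.choose_mul_factorial_mul_factorial hil)
    have h1 : ((i.factorial:ℝ)) ≠ 0 := Nat.cast_ne_zero.2 i.factorial_ne_zero
    have h2 : (((l-i).factorial:ℝ)) ≠ 0 := Nat.cast_ne_zero.2 (l-i).factorial_ne_zero
    field_simp
    linear_combination (-(poch (β-2) i * poch (β+(i:ℝ)) (l-i) * poch (β+(l:ℝ)) (k-l) * z^i * (1+z)^(k-l))) * hch
  rw [sum_congr rfl step1]
  -- Step 2: swap sums
  rw [sum_comm]
  -- Step 3: expand (1+z)^(k-l) and apply Vandermonde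
  have step3 : ∀ i ∈ range (k+1),
      ∑ l ∈ range (k+1), ((l.choose i : ℕ):ℝ)
          * (poch (β-2) i * poch (β+(i:ℝ)) (k-i)) * z^i * (1+z)^(k-l)
      = ∑ t ∈ range (k+1), (((k+1).choose (i+t+1) : ℕ):ℝ)
          * ((poch (β-2) i * poch (β+(i:ℝ)) (k-i)) * z^i * z^t) := by
    intro i _
    have expand : ∀ l ∈ range (k+1), ((l.choose i : ℕ):ℝ)
          * (poch (β-2) i * poch (β+(i:ℝ)) (k-i)) * z^i * (1+z)^(k-l)
        = ∑ t ∈ range (k+1), (((l.choose i) * ((k-l).choose t) : ℕ):ℝ)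
            * ((poch (β-2) i * poch (β+(i:ℝ)) (k-i)) * z^i * z^t) := by
      intro l hl
      rw [mem_range] at hl
      rw [binexp z (k-l) k (by omega), mul_sum]
      apply sum_congr rfl
      intro t _
      push_cast
      ring
    rw [sum_congr rfl expand, sum_comm]
    apply sum_congr rfl
    intro t _
    rw [← sum_mul]
    congr 1
    exact_mod_cast congrArg (Nat.cast : ℕ → ℝ) (vand k i t)
  rw [sum_congr rfl step3, mul_sum]
  -- Step 4: reindex t ↦ j = i+t+1
  have step4 : ∀ i ∈ range (k+1),
      z * ∑ t ∈ range (k+1), (((k+1).choose (i+t+1) : ℕ):ℝ)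
          * ((poch (β-2) i * poch (β+(i:ℝ)) (k-i)) * z^i * z^t)
      = ∑ j ∈ Ico (i+1) (k+2), poch (β-2) i * poch (β+(i:ℝ)) (k-i)
          * ((((k+1).choose j : ℕ):ℝ) * z^j) := by
    intro i hi
    rw [mem_range] at hi
    have hik : i ≤ k := by omega
    rw [mul_sum]
    rw [Finset.sum_Ico_eq_sum_range]
    rw [show k+2-(i+1) = k+1-i by omega]
    have shrink : ∑ t ∈ range (k+1-i), z * ((((k+1).choose (i+t+1) : ℕ):ℝ)
          * ((poch (β-2) i * poch (β+(i:ℝ)) (k-i)) * z^i * z^t))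
        = ∑ t ∈ range (k+1), z * ((((k+1).choose (i+t+1) : ℕ):ℝ)
          * ((poch (β-2) i * poch (β+(i:ℝ)) (k-i)) * z^i * z^t)) := by
      apply Finset.sum_subset (by intro x hx; rw [mem_range] at *; omega)
      intro t ht1 ht2
      rw [mem_range] at ht1 ht2
      push_neg at ht2
      rw [Nat.choose_eq_zero_of_lt (by omega)]
      simp
    rw [← shrink]
    apply sum_congr rfl
    intro t _
    rw [show i+1+t = i+t+1 by omega]
    ring
  rw [sum_congr rfl step4]
  have ext : ∑ i ∈ range (k+2), ∑ j ∈ Ico (i+1) (k+2), poch (β-2) i * poch (β+(i:ℝ)) (k-i)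
          * ((((k+1).choose j : ℕ):ℝ) * z^j)
      = ∑ i ∈ range (k+1), ∑ j ∈ Ico (i+1) (k+2), poch (β-2) i * poch (β+(i:ℝ)) (k-i)
          * ((((k+1).choose j : ℕ):ℝ) * z^j) := by
    rw [sum_range_succ, Finset.Ico_self, sum_empty, add_zero]
  rw [← ext, ← tri (k+2) (fun j i => poch (β-2) i * poch (β+(i:ℝ)) (k-i)
          * ((((k+1).choose j : ℕ):ℝ) * z^j))]
  apply sum_congr rfl
  intro j _
  rw [← sum_mul, mul_assoc]

lemma core (β z : ℝ) (k : ℕ) :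
    (∑ j ∈ range (k+2),
        poch (β-2) j * poch (β+(j:ℝ)) (k+1-j) / ((j.factorial:ℝ) * ((k+1-j).factorial:ℝ)) * z^j)
  = (∑ j ∈ range (k+1),
        poch (β-2) j * poch (β+(j:ℝ)) (k-j) / ((j.factorial:ℝ) * ((k-j).factorial:ℝ)) * z^j)
    + poch (β-1) (k+1) / (((k+1).factorial:ℝ)) * (1+z)^(k+1)
    - z * (∑ l ∈ range (k+1), (l.factorial:ℝ) * poch (β+(l:ℝ)) (k-l)
        * ((∑ i ∈ range (l+1),
              poch (β-2) i * poch (β+(i:ℝ)) (l-i) / ((i.factorial:ℝ) * ((l-i).factorial:ℝ)) * z^i)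
            * (1+z)^(k-l)))
      / ((k+1).factorial:ℝ) := by
  rw [hSlem β z k, sum_div]
  have key : ∀ j ∈ range (k+2),
      poch (β-2) j * poch (β+(j:ℝ)) (k+1-j) / ((j.factorial:ℝ) * ((k+1-j).factorial:ℝ)) * z^j
      = ((if j < k+1 then
            poch (β-2) j * poch (β+(j:ℝ)) (k-j) / ((j.factorial:ℝ) * ((k-j).factorial:ℝ)) * z^j
          else 0)
        + poch (β-1) (k+1) / (((k+1).factorial:ℝ)) * ((((k+1).choose j : ℕ):ℝ) * z^j))
        - (∑ i ∈ range j, poch (β-2) i * poch (β+(i:ℝ)) (k-i))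
            * (((k+1).choose j : ℕ):ℝ) * z^j / (((k+1).factorial:ℝ)) := by
    intro j hj
    rw [mem_range] at hj
    have hj1 : j ≤ k+1 := by omega
    have htel := tel β k j hj1
    have hC : (((k+1).choose j : ℕ):ℝ) * (j.factorial:ℝ) * ((k+1-j).factorial:ℝ)
        = (((k+1).factorial:ℝ)) := by
      exact_mod_cast congrArg (Nat.cast : ℕ → ℝ) (Nat.choose_mul_factorial_mul_factorial hj1)
    have hF1 : ((j.factorial:ℝ)) ≠ 0 := Nat.cast_ne_zero.2 j.factorial_ne_zero
    have hF2 : (((k+1-j).factorial:ℝ)) ≠ 0 := Nat.cast_ne_zero.2 (k+1-j).factorial_ne_zero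
    have hFK : (((k+1).factorial:ℝ)) ≠ 0 := Nat.cast_ne_zero.2 (k+1).factorial_ne_zero
    have hCval : (((k+1).choose j : ℕ):ℝ)
        = (((k+1).factorial:ℝ)) / ((j.factorial:ℝ) * ((k+1-j).factorial:ℝ)) := by
      rw [eq_div_iff (mul_ne_zero hF1 hF2)]
      rw [← mul_assoc] at *
      exact hC
    by_cases hjk : j < k+1
    · rw [if_pos hjk, htel, hCval]
      have hp := poch_pascal (β+(j:ℝ)) (k-j)
      rw [show (k-j)+1 = k+1-j by omega] at hp
      have hfs : (((k+1-j).factorial:ℝ)) = (((k-j:ℕ):ℝ)+1) * (((k-j).factorial:ℝ)) := by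
        rw [show k+1-j = (k-j)+1 by omega]
        push_cast [Nat.factorial_succ]
        ring
      have hF0 : (((k-j).factorial:ℝ)) ≠ 0 := Nat.cast_ne_zero.2 (k-j).factorial_ne_zero
      have termB : poch (β-1) (k+1) / (((k+1).factorial:ℝ))
            * ((((k+1).factorial:ℝ)) / ((j.factorial:ℝ) * ((k+1-j).factorial:ℝ)) * z^j)
          = poch (β-1) (k+1) / ((j.factorial:ℝ) * ((k+1-j).factorial:ℝ)) * z^j := by
        field_simp
      have termC : (poch (β-1) (k+1) - poch (β-2) j * poch (β+(j:ℝ)-1) (k+1-j))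
            * ((((k+1).factorial:ℝ)) / ((j.factorial:ℝ) * ((k+1-j).factorial:ℝ))) * z^j
            / (((k+1).factorial:ℝ))
          = (poch (β-1) (k+1) - poch (β-2) j * poch (β+(j:ℝ)-1) (k+1-j))
            / ((j.factorial:ℝ) * ((k+1-j).factorial:ℝ)) * z^j := by
        field_simp
      have termA : poch (β-2) j * poch (β+(j:ℝ)) (k-j)
            / ((j.factorial:ℝ) * ((k-j).factorial:ℝ)) * z^j
          = poch (β-2) j * poch (β+(j:ℝ)) (k-j) * ((((k-j):ℕ):ℝ)+1)
            / ((j.factorial:ℝ) * ((k+1-j).factorial:ℝ)) * z^j := by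
        rw [hfs]
        have hn1 : (((k-j:ℕ)):ℝ) + 1 ≠ 0 := by positivity
        field_simp
      rw [termB, termC, termA]
      linear_combination (poch (β-2) j * z^j / ((j.factorial:ℝ) * (((k+1-j).factorial:ℝ)))) * hp
    · have : j = k+1 := by omega
      subst this
      rw [if_neg hjk, htel, Nat.sub_self, Nat.choose_self]
      simp only [poch_zero, Nat.cast_one, Nat.factorial_zero, mul_one, one_mul]
      field_simp
      ring
  rw [sum_congr rfl key, sum_sub_distrib, sum_add_distrib]
  congr 1
  congr 1
  · rw [sum_range_succ, if_neg (lt_irrefl _), add_zero]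
    apply sum_congr rfl
    intro j hj
    rw [mem_range] at hj
    rw [if_pos (by omega)]
  · rw [← mul_sum, binexp z (k+1) (k+1) le_rfl]

/-- With `b_k = (β−1)_k/k!` and the closed-form coefficients
`c_k = (−1)^k (1+z)^{−2} P_k^{(2−β−k, β−1)}((z−1)/(z+1))` (Jacobi polynomials), the
sequence `c` satisfies the `ρ₀ = 1` converging-factor recursion of the logarithm series:
`c_0 = b_0/(1+z)²` and `c_k = c_{k−1}/(1+z) + b_k/(1+z)² − z d_k/(1+z)` for all `k ≥ 1`. -/
theorem jacobi_solves_logarithm_convFactor_recursion (β z : ℝ) (hz : z ≠ -1) :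
    (fun k : ℕ => (-1 : ℝ) ^ k / (1 + z) ^ 2 * jacobi (2 - β - k) (β - 1) k ((z - 1) / (z + 1))) 0
      = (fun k : ℕ => poch (β - 1) k / (Nat.factorial k : ℝ)) 0 / (1 + z) ^ 2
    ∧ ∀ k : ℕ,
        (fun k : ℕ => (-1 : ℝ) ^ k / (1 + z) ^ 2 *
            jacobi (2 - β - k) (β - 1) k ((z - 1) / (z + 1))) (k + 1)
          = (fun k : ℕ => (-1 : ℝ) ^ k / (1 + z) ^ 2 *
              jacobi (2 - β - k) (β - 1) k ((z - 1) / (z + 1))) k / (1 + z)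
            + (poch (β - 1) (k + 1) / (Nat.factorial (k + 1) : ℝ)) / (1 + z) ^ 2
            - z * prodCoeff (fun k : ℕ => poch (β - 1) k / (Nat.factorial k : ℝ))
                (fun k : ℕ => (-1 : ℝ) ^ k / (1 + z) ^ 2 *
                  jacobi (2 - β - k) (β - 1) k ((z - 1) / (z + 1))) (k + 1) / (1 + z) := by
  have hz1 : (1:ℝ)+z ≠ 0 := fun h => hz (by linarith)
  have hzp : z + 1 ≠ 0 := fun h => hz (by linarith)
  constructor
  · simp [jacobi, poch]
  · intro k
    simp only []
    rw [prodCoeff]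
    simp only [Nat.add_sub_cancel]
    rw [dsum β (fun l : ℕ => (-1 : ℝ) ^ l / (1 + z) ^ 2 *
        jacobi (2 - β - l) (β - 1) l ((z - 1) / (z + 1))) k]
    have conv1 : ∀ l ∈ Finset.range (k+1),
        (l.factorial:ℝ) * poch (β+(l:ℝ)) (k-l)
          * ((-1 : ℝ) ^ l / (1 + z) ^ 2 * jacobi (2 - β - l) (β - 1) l ((z - 1) / (z + 1)))
        = (l.factorial:ℝ) * poch (β+(l:ℝ)) (k-l)
          * ((∑ i ∈ Finset.range (l+1),
              poch (β-2) i * poch (β+(i:ℝ)) (l-i) / ((i.factorial:ℝ) * ((l-i).factorial:ℝ)) * z^i)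
            * (1+z)^(k-l)) / (1+z)^(k+2) := by
      intro l hl
      rw [Finset.mem_range] at hl
      rw [cform β z hzp l]
      rw [show (1+z)^(k+2) = (1+z)^(l+2) * (1+z)^(k-l) by rw [← pow_add]; congr 1; omega]
      have h1 : ((1:ℝ)+z)^(l+2) ≠ 0 := pow_ne_zero _ hz1
      have h2 : ((1:ℝ)+z)^(k-l) ≠ 0 := pow_ne_zero _ hz1
      field_simp
    rw [Finset.sum_congr rfl conv1, ← Finset.sum_div]
    rw [cform β z hzp (k+1), cform β z hzp k]
    rw [show k+1+1 = k+2 from rfl]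
    rw [core β z k]
    have hp1 : ((1:ℝ)+z)^(k+2) ≠ 0 := pow_ne_zero _ hz1
    have hp2 : ((1:ℝ)+z)^(k+1+2) ≠ 0 := pow_ne_zero _ hz1
    have hFK : (((k+1).factorial:ℝ)) ≠ 0 := Nat.cast_ne_zero.2 (k+1).factorial_ne_zero
    field_simp
    ring
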